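/- For real angles φ₁, φ₂ with q₁φ₁ + q₂φ₂ = 0, q₁, q₂ ≥ 0, q₁ + q₂ = 1, the operator norm of exp(iφ_jσ_Z) − (q₁ exp(iφ₁σ_Z) + q₂ exp(iφ₂σ_Z)) equals |e^{iφ_j} − q₁e^{iφ₁} − q₂e^{iφ₂}| for j = 1,2, and consequently δ := Σ_j q_j ‖exp(iφ_jσ_Z) − W̄‖² satisfies δ ≤ q₁φ₁² + q₂φ₂² + C(φ₁⁴ + φ₂⁴) for an absolute constant C. -/

import Mathlib

open scoped Matrix.Norms.L2Operator ComplexOrder Kronecker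
open Matrix Complex

/-- The trace norm (sum of singular values) of a square complex matrix. -/
noncomputable def traceNorm {n : Type*} [Fintype n] [DecidableEq n] (A : Matrix n n ℂ) : ℝ :=
  (((Matrix.posSemidef_conjTranspose_mul_self A).1.eigenvectorUnitary.1 *
      Matrix.diagonal (((↑) : ℝ → ℂ) ∘ (√·) ∘ (Matrix.posSemidef_conjTranspose_mul_self A).1.eigenvalues) *
      (star (Matrix.posSemidef_conjTranspose_mul_self A).1.eigenvectorUnitary : Matrix n n ℂ)).trace).re

/-!
Write `exp (i φ σ_Z) = diag(e^{iφ}, conj e^{iφ})`. Matrices of the form `diag(z, z̄)` depend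
real-linearly on `z` and have operator norm `|z|`, so `V j - W̄ = diag(z_j, z̄_j)` with
`z_j = e^{iφ_j} - q₁e^{iφ₁} - q₂e^{iφ₂}`, which gives the norm formula. Since `q₁ + q₂ = 1`,
`z₁ = q₂(e^{iφ₁} - e^{iφ₂})` and `z₂ = q₁(e^{iφ₂} - e^{iφ₁})`, hence
`δ = q₁q₂|e^{iφ₁} - e^{iφ₂}|² ≤ q₁q₂(φ₁ - φ₂)² = q₁φ₁² + q₂φ₂²`, the last step by
`q₁φ₁ + q₂φ₂ = 0`; so any `C > 0` works.
-/

open ComplexConjugate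

namespace Complex

lemma conj_exp_I_mul_ofReal (x : ℝ) : conj (exp (I * x)) = exp (-(I * x)) := by
  rw [← exp_conj, map_mul, conj_I, conj_ofReal, neg_mul]

lemma norm_exp_I_mul_ofReal_sub_exp_I_mul_ofReal_le (x y : ℝ) :
    ‖exp (I * x) - exp (I * y)‖ ≤ |x - y| := by
  have hfactor : exp (I * x) - exp (I * y) = exp (I * y) * (exp (I * ↑(x - y)) - 1) := by
    rw [mul_sub, ← exp_add]; push_cast; ring_nf
  rw [hfactor, norm_mul, norm_exp_I_mul_ofReal, one_mul, ← Real.norm_eq_abs]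
  exact Real.norm_exp_I_mul_ofReal_sub_one_le

end Complex

noncomputable def conjDiagonal (z : ℂ) : Matrix (Fin 2) (Fin 2) ℂ := diagonal ![z, conj z]

lemma conjDiagonal_sub (z w : ℂ) : conjDiagonal (z - w) = conjDiagonal z - conjDiagonal w := by
  rw [conjDiagonal, conjDiagonal, conjDiagonal, diagonal_sub, map_sub]
  congr 1
  ext i; fin_cases i <;> rfl

lemma conjDiagonal_ofReal_mul (r : ℝ) (z : ℂ) :
    conjDiagonal (r * z) = (r : ℂ) • conjDiagonal z := by
  ext i k
  fin_cases i <;> fin_cases k <;> simp [conjDiagonal]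

lemma l2_opNorm_conjDiagonal (z : ℂ) : ‖conjDiagonal z‖ = ‖z‖ := by
  rw [conjDiagonal, l2_opNorm_diagonal]
  refine le_antisymm ((pi_norm_le_iff_of_nonneg (norm_nonneg z)).2 fun i => ?_)
    (norm_le_pi_norm ![z, conj z] 0)
  fin_cases i <;> simp

lemma conjDiagonal_exp_I_mul_ofReal (x : ℝ) :
    conjDiagonal (exp (I * x)) = diagonal ![exp (I * x), exp (-(I * x))] := by
  rw [conjDiagonal, conj_exp_I_mul_ofReal]

lemma weighted_sum_sq_norm_sub_mean {E : Type*} [SeminormedAddCommGroup E]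
    [NormedSpace ℝ E] {q₁ q₂ : ℝ} (hq₁ : 0 ≤ q₁) (hq₂ : 0 ≤ q₂) (hq : q₁ + q₂ = 1) (a b : E) :
    q₁ * ‖a - q₁ • a - q₂ • b‖ ^ 2 + q₂ * ‖b - q₁ • a - q₂ • b‖ ^ 2 = q₁ * q₂ * ‖a - b‖ ^ 2 := by
  have ha : a - q₁ • a - q₂ • b = q₂ • (a - b) := by
    linear_combination (norm := module) -(hq • a)
  have hb : b - q₁ • a - q₂ • b = q₁ • (b - a) := by
    linear_combination (norm := module) -(hq • b)
  rw [ha, hb, norm_smul, norm_smul, norm_sub_rev b, Real.norm_of_nonneg hq₁,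
    Real.norm_of_nonneg hq₂]
  linear_combination (q₁ * q₂ * ‖a - b‖ ^ 2) * hq

lemma weighted_sq_sub_eq_of_mean_eq_zero {q₁ q₂ x y : ℝ} (hq : q₁ + q₂ = 1)
    (hmean : q₁ * x + q₂ * y = 0) : q₁ * q₂ * (x - y) ^ 2 = q₁ * x ^ 2 + q₂ * y ^ 2 := by
  linear_combination (-(q₁ * x + q₂ * y)) * hmean + (q₁ * x ^ 2 + q₂ * y ^ 2) * hq

theorem stmt_9 :
    ∃ C : ℝ, 0 < C ∧
      ∀ (q₁ q₂ φ₁ φ₂ : ℝ), 0 ≤ q₁ → 0 ≤ q₂ → q₁ + q₂ = 1 → q₁ * φ₁ + q₂ * φ₂ = 0 →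
        ∀ (V : Fin 2 → Matrix (Fin 2) (Fin 2) ℂ),
          (∀ j, V j = Matrix.diagonal
              ![Complex.exp (Complex.I * (![φ₁, φ₂] j)),
                Complex.exp (-(Complex.I * (![φ₁, φ₂] j)))]) →
          ∀ (Wbar : Matrix (Fin 2) (Fin 2) ℂ),
            Wbar = (q₁ : ℂ) • V 0 + (q₂ : ℂ) • V 1 →
            (∀ j, ‖V j - Wbar‖ =
                ‖(Complex.exp (Complex.I * (![φ₁, φ₂] j))
                  - (q₁ : ℂ) * Complex.exp (Complex.I * φ₁)
                  - (q₂ : ℂ) * Complex.exp (Complex.I * φ₂))‖) ∧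
            q₁ * ‖V 0 - Wbar‖ ^ 2 + q₂ * ‖V 1 - Wbar‖ ^ 2 ≤
              q₁ * φ₁ ^ 2 + q₂ * φ₂ ^ 2 + C * (φ₁ ^ 4 + φ₂ ^ 4) := by
  refine ⟨1, one_pos, fun q₁ q₂ φ₁ φ₂ hq₁ hq₂ hq hmean V hV Wbar hW => ?_⟩
  have hV_conj : ∀ j, V j = conjDiagonal (exp (I * (![φ₁, φ₂] j))) := fun j => by
    rw [hV j, conjDiagonal_exp_I_mul_ofReal]
  have hnorm : ∀ j, ‖V j - Wbar‖ =
      ‖exp (I * (![φ₁, φ₂] j)) - q₁ * exp (I * φ₁) - q₂ * exp (I * φ₂)‖ := fun j => by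
    rw [← l2_opNorm_conjDiagonal, conjDiagonal_sub, conjDiagonal_sub, conjDiagonal_ofReal_mul,
      conjDiagonal_ofReal_mul, sub_sub, hW, hV_conj, hV_conj 0, hV_conj 1]
    rfl
  refine ⟨hnorm, ?_⟩
  have hphase := norm_exp_I_mul_ofReal_sub_exp_I_mul_ofReal_le φ₁ φ₂
  calc q₁ * ‖V 0 - Wbar‖ ^ 2 + q₂ * ‖V 1 - Wbar‖ ^ 2
      = q₁ * q₂ * ‖exp (I * φ₁) - exp (I * φ₂)‖ ^ 2 := by
        simp only [hnorm, ← real_smul]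
        exact weighted_sum_sq_norm_sub_mean hq₁ hq₂ hq _ _
    _ ≤ q₁ * q₂ * (φ₁ - φ₂) ^ 2 := by
        rw [← sq_abs (φ₁ - φ₂)]
        exact mul_le_mul_of_nonneg_left (by gcongr) (mul_nonneg hq₁ hq₂)
    _ = q₁ * φ₁ ^ 2 + q₂ * φ₂ ^ 2 := weighted_sq_sub_eq_of_mean_eq_zero hq hmean
    _ ≤ q₁ * φ₁ ^ 2 + q₂ * φ₂ ^ 2 + 1 * (φ₁ ^ 4 + φ₂ ^ 4) := by
        apply le_add_of_nonneg_right; positivity
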